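/- arXiv:1408.4409 — 7 statements merged into one kernel-verified Lean document; each statement's English description precedes it below -/
import Mathlib

section
/- Let (H, A, ‖·‖♯) be a CS space with bound L over 𝔽 ∈ {ℝ, ℂ}, and let Φ : H → 𝔽^M be a linear map. Suppose Φ satisfies the (ρ,α)-robust width property over B♯ with 0 < ρ ≤ 1/(4L) and α > 0. Then for every x♮ ∈ H, every ε ≥ 0, every e ∈ 𝔽^M with ‖e‖₂ ≤ ε, every a ∈ A, and every x⋆ ∈ H such that ‖Φx⋆ − (Φx♮ + e)‖₂ ≤ ε and ‖x⋆‖♯ ≤ ‖x‖♯ for all x ∈ H with ‖Φx − (Φx♮ + e)‖₂ ≤ ε, one has ‖x⋆ − x♮‖₂ ≤ 4ρ‖x♮ − a‖♯ + (2/α)ε. -/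
/-!
Let `z = x⋆ - x♮`. Both `x⋆` and `x♮` satisfy the measurement constraint, so `‖Φz‖₂ ≤ 2ε`.
If `‖Φz‖₂ ≥ α‖z‖₂` this gives `‖z‖₂ ≤ 2ε/α`. Otherwise robust width gives `‖z‖₂ ≤ ρ‖z‖♯`, and
splitting `z = z₁ + z₂` at `a`, the minimality `‖x⋆‖♯ ≤ ‖x♮‖♯` yields the cone-type bound
`‖z‖♯ ≤ 2‖x♮ - a‖♯ + 2‖z₂‖♯ ≤ 2‖x♮ - a‖♯ + 2L‖z‖₂`; since `2ρL ≤ 1/2` the last term is absorbed.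
-/

section CompressedSensing

variable {E G : Type*}

/-- The decomposition axiom of a CS space `(E, A, p)` with bound `L`. -/
def HasCSDecomposition [NormedAddCommGroup E] (p : E → ℝ) (A : Set E) (L : ℝ) : Prop :=
  ∀ a ∈ A, ∀ z : E, ∃ z₁ z₂ : E, z = z₁ + z₂ ∧ p (a + z₁) = p a + p z₁ ∧ p z₂ ≤ L * ‖z‖

/-- The `(ρ, α)`-robust width property of `Φ` over the unit ball of `p`. -/
def RobustWidth [Norm E] [Norm G] (Φ : E → G) (p : E → ℝ) (ρ α : ℝ) : Prop :=
  ∀ x : E, ‖Φ x‖ < α * ‖x‖ → ‖x‖ ≤ ρ * p x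

lemma mul_le_one_div_four_of_le_one_div {ρ L : ℝ} (hρ : 0 ≤ ρ) (h : ρ ≤ 1 / (4 * L)) :
    ρ * L ≤ 1 / 4 := by
  rcases le_or_gt L 0 with hL | hL
  · nlinarith [mul_nonpos_of_nonneg_of_nonpos hρ hL]
  · rwa [le_div_iff₀ (by positivity), mul_comm 4, ← mul_assoc, ← le_div_iff₀ four_pos] at h

lemma norm_map_sub_le_of_dist_le [SeminormedAddCommGroup G] {F : Type*} [FunLike F E G]
    [AddCommGroup E] [AddMonoidHomClass F E G] (Φ : F) {x y : E} {b : G} {ε : ℝ}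
    (hx : ‖Φ x - b‖ ≤ ε) (hy : ‖Φ y - b‖ ≤ ε) : ‖Φ (y - x)‖ ≤ 2 * ε := by
  have : Φ (y - x) = (Φ y - b) - (Φ x - b) := by rw [map_sub]; abel
  rw [this]
  linarith [norm_sub_le (Φ y - b) (Φ x - b)]

lemma map_sub_le_of_map_le_of_decomposition [AddCommGroup E] {F : Type*} [FunLike F E ℝ]
    [AddGroupSeminormClass F E ℝ] (p : F) {a x y z₁ z₂ : E} (hle : p y ≤ p x)
    (hz : y - x = z₁ + z₂) (hadd : p (a + z₁) = p a + p z₁) :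
    p (y - x) ≤ 2 * p (x - a) + 2 * p z₂ := by
  have hsplit : p (y - x) ≤ p z₁ + p z₂ := hz ▸ map_add_le_add p z₁ z₂
  have hx : p x ≤ p a + p (x - a) := by
    simpa using map_add_le_add p a (x - a)
  have ha : p (a + z₁) ≤ p y + p (x - a) + p z₂ := by
    have : a + z₁ = y - (x - a) - z₂ := by
      rw [eq_sub_iff_add_eq, add_assoc, ← hz]; abel
    rw [this]
    linarith [map_sub_le_add p (y - (x - a)) z₂, map_sub_le_add p y (x - a)]
  linarith

variable [NormedAddCommGroup E] [Norm G] {F : Type*} [FunLike F E ℝ] [AddGroupSeminormClass F E ℝ]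

lemma norm_sub_le_of_robustWidth {p : F} {A : Set E} {L ρ α ε : ℝ} {Φ : E → G}
    (hA : HasCSDecomposition p A L) (hΦ : RobustWidth Φ p ρ α) (hρ : 0 ≤ ρ)
    (hρL : ρ * L ≤ 1 / 4) (hα : 0 < α) (hε : 0 ≤ ε) {a x y : E} (ha : a ∈ A)
    (hle : p y ≤ p x) (hmeas : ‖Φ (y - x)‖ ≤ 2 * ε) :
    ‖y - x‖ ≤ 4 * ρ * p (x - a) + (2 / α) * ε := by
  have hpa := apply_nonneg p (x - a)
  by_cases hwidth : ‖Φ (y - x)‖ < α * ‖y - x‖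
  · obtain ⟨z₁, z₂, hz, hadd, hz₂⟩ := hA a ha (y - x)
    have hcone := map_sub_le_of_map_le_of_decomposition p hle hz hadd
    have hρz := mul_le_mul_of_nonneg_left hcone hρ
    have hρz₂ := mul_le_mul_of_nonneg_left hz₂ hρ
    have : 0 ≤ (2 / α) * ε := by positivity
    nlinarith [hΦ _ hwidth, norm_nonneg (y - x)]
  · have : ‖y - x‖ ≤ (2 / α) * ε := by
      rw [div_mul_eq_mul_div, le_div_iff₀ hα]
      linarith
    nlinarith

end CompressedSensing

theorem stmt0_general {𝕜 H : Type*} [RCLike 𝕜] [NormedAddCommGroup H] [InnerProductSpace 𝕜 H]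
    {M : ℕ}
    (sharp : H → ℝ)
    (sharp_add : ∀ x y : H, sharp (x + y) ≤ sharp x + sharp y)
    (sharp_smul : ∀ (c : 𝕜) (x : H), sharp (c • x) = ‖c‖ * sharp x)
    (A : Set H)
    (L : ℝ)
    (hdecomp : ∀ a ∈ A, ∀ z : H, ∃ z₁ z₂ : H, z = z₁ + z₂ ∧
      sharp (a + z₁) = sharp a + sharp z₁ ∧ sharp z₂ ≤ L * ‖z‖)
    (Φ : H →ₗ[𝕜] EuclideanSpace 𝕜 (Fin M))
    (ρ α : ℝ) (hρ : 0 < ρ) (hρL : ρ ≤ 1 / (4 * L)) (hα : 0 < α)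
    (hRWP : ∀ x : H, ‖Φ x‖ < α * ‖x‖ → ‖x‖ ≤ ρ * sharp x) :
    ∀ (xnat : H) (ε : ℝ), 0 ≤ ε → ∀ e : EuclideanSpace 𝕜 (Fin M), ‖e‖ ≤ ε →
      ∀ a ∈ A, ∀ xstar : H,
        ‖Φ xstar - (Φ xnat + e)‖ ≤ ε →
        (∀ x : H, ‖Φ x - (Φ xnat + e)‖ ≤ ε → sharp xstar ≤ sharp x) →
        ‖xstar - xnat‖ ≤ 4 * ρ * sharp (xnat - a) + (2 / α) * ε := by
  intro xnat ε hε e he a ha xstar hfeas hmin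
  let p : Seminorm 𝕜 H := Seminorm.of sharp sharp_add sharp_smul
  have hnat : ‖Φ xnat - (Φ xnat + e)‖ ≤ ε := by simpa using he
  exact norm_sub_le_of_robustWidth (p := p) hdecomp hRWP hρ.le
    (mul_le_one_div_four_of_le_one_div hρ.le hρL) hα hε ha (hmin xnat hnat)
    (norm_map_sub_le_of_dist_le Φ hnat hfeas)

/-- If `(H, A, ‖·‖♯)` is a CS space with bound `L` and
`Φ : H → 𝔽^M` satisfies the `(ρ,α)`-robust width property over `B♯` with
`0 < ρ ≤ 1/(4L)` and `α > 0`, then any `♯`-minimizer subject to the noisy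
measurement constraint satisfies
`‖x⋆ − x♮‖₂ ≤ 4ρ‖x♮ − a‖♯ + (2/α)ε` for every `a ∈ A`. -/
theorem stmt0 {𝕜 H : Type*} [RCLike 𝕜] [NormedAddCommGroup H] [InnerProductSpace 𝕜 H]
    [FiniteDimensional 𝕜 H] {M : ℕ}
    (sharp : H → ℝ)
    (sharp_add : ∀ x y : H, sharp (x + y) ≤ sharp x + sharp y)
    (sharp_smul : ∀ (c : 𝕜) (x : H), sharp (c • x) = ‖c‖ * sharp x)
    (sharp_def : ∀ x : H, sharp x = 0 → x = 0)
    (A : Set H) (hA0 : (0 : H) ∈ A)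
    (L : ℝ) (hL : 0 < L)
    (hdecomp : ∀ a ∈ A, ∀ z : H, ∃ z₁ z₂ : H, z = z₁ + z₂ ∧
      sharp (a + z₁) = sharp a + sharp z₁ ∧ sharp z₂ ≤ L * ‖z‖)
    (Φ : H →ₗ[𝕜] EuclideanSpace 𝕜 (Fin M))
    (ρ α : ℝ) (hρ : 0 < ρ) (hρL : ρ ≤ 1 / (4 * L)) (hα : 0 < α)
    (hRWP : ∀ x : H, ‖Φ x‖ < α * ‖x‖ → ‖x‖ ≤ ρ * sharp x) :
    ∀ (xnat : H) (ε : ℝ), 0 ≤ ε → ∀ e : EuclideanSpace 𝕜 (Fin M), ‖e‖ ≤ ε →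
      ∀ a ∈ A, ∀ xstar : H,
        ‖Φ xstar - (Φ xnat + e)‖ ≤ ε →
        (∀ x : H, ‖Φ x - (Φ xnat + e)‖ ≤ ε → sharp xstar ≤ sharp x) →
        ‖xstar - xnat‖ ≤ 4 * ρ * sharp (xnat - a) + (2 / α) * ε :=
  stmt0_general sharp sharp_add sharp_smul A L hdecomp Φ ρ α hρ hρL hα hRWP
end

section
/- Let H be a finite-dimensional real or complex Hilbert space with inner-product norm ‖·‖₂, let ‖·‖♯ be a norm on H, let A ⊆ H contain 0, and let Φ : H → 𝔽^M be a linear map (𝔽 ∈ {ℝ, ℂ}). Suppose there exist constants C₀, C₁ > 0 such that for every x♮ ∈ H, every ε ≥ 0, every e ∈ 𝔽^M with ‖e‖₂ ≤ ε, and every x⋆ ∈ H satisfying ‖Φx⋆ − (Φx♮ + e)‖₂ ≤ ε and ‖x⋆‖♯ ≤ ‖x‖♯ for all x with ‖Φx − (Φx♮ + e)‖₂ ≤ ε, one has ‖x⋆ − x♮‖₂ ≤ C₀‖x♮ − a‖♯ + C₁ε for every a ∈ A. Then Φ satisfies the (2C₀, 1/(2C₁))-robust width property over B♯. -/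
theorem stmt1_general {𝕜 H : Type*} [RCLike 𝕜] [NormedAddCommGroup H] [InnerProductSpace 𝕜 H]
    {M : ℕ}
    (sharp : H → ℝ)
    (sharp_add : ∀ x y : H, sharp (x + y) ≤ sharp x + sharp y)
    (sharp_smul : ∀ (c : 𝕜) (x : H), sharp (c • x) = ‖c‖ * sharp x)
    (A : Set H) (hA0 : (0 : H) ∈ A)
    (Φ : H →ₗ[𝕜] EuclideanSpace 𝕜 (Fin M))
    (C₀ C₁ : ℝ) (hC₁ : 0 < C₁)
    (hguarantee : ∀ (xnat : H) (ε : ℝ), 0 ≤ ε →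
      ∀ e : EuclideanSpace 𝕜 (Fin M), ‖e‖ ≤ ε →
      ∀ xstar : H,
        ‖Φ xstar - (Φ xnat + e)‖ ≤ ε →
        (∀ x : H, ‖Φ x - (Φ xnat + e)‖ ≤ ε → sharp xstar ≤ sharp x) →
        ∀ a ∈ A, ‖xstar - xnat‖ ≤ C₀ * sharp (xnat - a) + C₁ * ε) :
    ∀ x : H, ‖Φ x‖ < (1 / (2 * C₁)) * ‖x‖ → ‖x‖ ≤ 2 * C₀ * sharp x := by
  intro x hx
  let p : Seminorm 𝕜 H := Seminorm.of sharp sharp_add sharp_smul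
  have zero_minimizes : ∀ y : H, sharp 0 ≤ sharp y := fun y =>
    (map_zero p).trans_le (apply_nonneg p y)
  -- The noise `e = -Φ x` at level `ε = ‖Φ x‖` hides `x` completely, and `0` is a ♯-minimizer.
  have decoded := hguarantee x ‖Φ x‖ (norm_nonneg _) (-Φ x) (norm_neg _).le 0 (by simp)
    (fun y _ => zero_minimizes y) 0 hA0
  simp only [zero_sub, sub_zero, norm_neg] at decoded
  have noise_small : C₁ * ‖Φ x‖ < ‖x‖ / 2 := by
    calc C₁ * ‖Φ x‖ < C₁ * (1 / (2 * C₁) * ‖x‖) := mul_lt_mul_of_pos_left hx hC₁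
      _ = ‖x‖ / 2 := by field_simp
  linarith

/-- If the decoder `Δ_{♯,Φ,ε}` satisfies the uniform guarantee
`‖x⋆ − x♮‖₂ ≤ C₀‖x♮ − a‖♯ + C₁ε` for all `x♮, ε, e, a ∈ A` and all minimizers `x⋆`,
then `Φ` satisfies the `(2C₀, 1/(2C₁))`-robust width property over `B♯`. -/
theorem stmt1 {𝕜 H : Type*} [RCLike 𝕜] [NormedAddCommGroup H] [InnerProductSpace 𝕜 H]
    [FiniteDimensional 𝕜 H] {M : ℕ}
    (sharp : H → ℝ)
    (sharp_add : ∀ x y : H, sharp (x + y) ≤ sharp x + sharp y)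
    (sharp_smul : ∀ (c : 𝕜) (x : H), sharp (c • x) = ‖c‖ * sharp x)
    (sharp_def : ∀ x : H, sharp x = 0 → x = 0)
    (A : Set H) (hA0 : (0 : H) ∈ A)
    (Φ : H →ₗ[𝕜] EuclideanSpace 𝕜 (Fin M))
    (C₀ C₁ : ℝ) (hC₀ : 0 < C₀) (hC₁ : 0 < C₁)
    (hguarantee : ∀ (xnat : H) (ε : ℝ), 0 ≤ ε →
      ∀ e : EuclideanSpace 𝕜 (Fin M), ‖e‖ ≤ ε →
      ∀ xstar : H,
        ‖Φ xstar - (Φ xnat + e)‖ ≤ ε →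
        (∀ x : H, ‖Φ x - (Φ xnat + e)‖ ≤ ε → sharp xstar ≤ sharp x) →
        ∀ a ∈ A, ‖xstar - xnat‖ ≤ C₀ * sharp (xnat - a) + C₁ * ε) :
    ∀ x : H, ‖Φ x‖ < (1 / (2 * C₁)) * ‖x‖ → ‖x‖ ≤ 2 * C₀ * sharp x :=
  stmt1_general sharp sharp_add sharp_smul A hA0 Φ C₀ C₁ hC₁ hguarantee
end

section
/- Let 𝔽 ∈ {ℝ, ℂ}, let w₁, …, w_N > 0, let W be the N×N diagonal matrix with diagonal entries w_i, and for x ∈ 𝔽^N set S_W(x) := Σ_{i ∈ supp(x)} w_i² and ‖x‖♯ := ‖Wx‖₁ = Σᵢ wᵢ|xᵢ|. Let K > 0 and Σ_{W,K} := {x ∈ 𝔽^N : S_W(x) ≤ K}. Then for every a ∈ Σ_{W,K} and every z ∈ 𝔽^N there exist z₁, z₂ with z = z₁ + z₂, ⟨z₁, z₂⟩ = 0, ‖W(a + z₁)‖₁ = ‖Wa‖₁ + ‖Wz₁‖₁, and ‖Wz₂‖₁ ≤ √K‖z‖₂; that is, (𝔽^N, Σ_{W,K}, ‖W·‖₁)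 is a CS space with bound √K. -/
open scoped Classical

/-!
Split `z` along the support `S` of `a`: the part `z₁` of `z` off `S` is orthogonal to the part
`z₂` on `S`, and `a`, `z₁` have disjoint supports, so the weighted `ℓ¹` norm is additive on
`a + z₁`. By Cauchy–Schwarz, `∑_{i ∈ S} wᵢ |zᵢ| ≤ (∑_{i ∈ S} wᵢ²)^{1/2} ‖z‖₂ ≤ √K ‖z‖₂`.
-/

theorem Finset.sum_mul_norm_add_of_forall_eq_zero_or {ι E : Type*} [SeminormedAddCommGroup E]
    (s : Finset ι) (w : ι → ℝ) {f g : ι → E} (h : ∀ i, f i = 0 ∨ g i = 0) :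
    ∑ i ∈ s, w i * ‖f i + g i‖ = ∑ i ∈ s, w i * ‖f i‖ + ∑ i ∈ s, w i * ‖g i‖ := by
  rw [← Finset.sum_add_distrib]
  refine Finset.sum_congr rfl fun i _ => ?_
  rcases h i with hf | hg
  · simp [hf]
  · simp [hg]

namespace EuclideanSpace

variable {𝕜 ι : Type*} [RCLike 𝕜]

noncomputable def indicator (s : Set ι) (z : EuclideanSpace 𝕜 ι) : EuclideanSpace 𝕜 ι :=
  WithLp.toLp 2 (s.indicator z)

@[simp]
theorem indicator_apply (s : Set ι) (z : EuclideanSpace 𝕜 ι) (i : ι) :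
    indicator s z i = s.indicator z i :=
  rfl

theorem indicator_compl_add_indicator (s : Set ι) (z : EuclideanSpace 𝕜 ι) :
    indicator sᶜ z + indicator s z = z := by
  ext i
  simp [Set.indicator_compl_add_self_apply]

variable [Fintype ι]

theorem inner_indicator_indicator_of_disjoint {s t : Set ι} (hst : Disjoint s t)
    (y z : EuclideanSpace 𝕜 ι) : inner 𝕜 (indicator s y) (indicator t z) = 0 := by
  rw [PiLp.inner_apply]
  refine Finset.sum_eq_zero fun i _ => ?_
  by_cases hi : i ∈ t
  · simp [Set.indicator_of_notMem (hst.notMem_of_mem_right hi)]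
  · simp [Set.indicator_of_notMem hi]

theorem sum_mul_norm_indicator_le (s : Finset ι) (w : ι → ℝ) (z : EuclideanSpace 𝕜 ι) :
    ∑ i, w i * ‖indicator (s : Set ι) z i‖ ≤ √(∑ i ∈ s, w i ^ 2) * ‖z‖ := by
  have hnorm : ∑ i ∈ s, ‖z i‖ ^ 2 ≤ ‖z‖ ^ 2 := by
    rw [EuclideanSpace.norm_sq_eq]
    exact Finset.sum_le_sum_of_subset_of_nonneg s.subset_univ fun i _ _ => by positivity
  calc ∑ i, w i * ‖indicator (s : Set ι) z i‖
      = ∑ i ∈ s, w i * ‖z i‖ := by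
        simp only [indicator_apply, Set.indicator_apply, Finset.mem_coe, apply_ite norm,
          norm_zero, mul_ite, mul_zero, Finset.sum_ite_mem, Finset.univ_inter]
    _ ≤ √(∑ i ∈ s, w i ^ 2) * √(∑ i ∈ s, ‖z i‖ ^ 2) := Real.sum_mul_le_sqrt_mul_sqrt _ _ _
    _ ≤ √(∑ i ∈ s, w i ^ 2) * ‖z‖ := by
      gcongr
      exact (Real.sqrt_le_left (norm_nonneg z)).2 hnorm

end EuclideanSpace

theorem stmt3_general {𝕜 : Type*} [RCLike 𝕜] {N : ℕ}
    (w : Fin N → ℝ) (K : ℝ) :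
    ∀ a : EuclideanSpace 𝕜 (Fin N),
      (∑ i ∈ Finset.univ.filter fun i => a i ≠ 0, w i ^ 2) ≤ K →
      ∀ z : EuclideanSpace 𝕜 (Fin N),
        ∃ z₁ z₂ : EuclideanSpace 𝕜 (Fin N), z = z₁ + z₂ ∧
          inner 𝕜 z₁ z₂ = (0 : 𝕜) ∧
          (∑ i, w i * ‖a i + z₁ i‖) = (∑ i, w i * ‖a i‖) + (∑ i, w i * ‖z₁ i‖) ∧
          (∑ i, w i * ‖z₂ i‖) ≤ Real.sqrt K * ‖z‖ := by
  intro a ha z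
  set S : Finset (Fin N) := Finset.univ.filter fun i => a i ≠ 0
  refine ⟨EuclideanSpace.indicator (↑S)ᶜ z, EuclideanSpace.indicator (↑S) z,
    (EuclideanSpace.indicator_compl_add_indicator _ z).symm,
    EuclideanSpace.inner_indicator_indicator_of_disjoint disjoint_compl_left z z, ?_, ?_⟩
  · refine Finset.sum_mul_norm_add_of_forall_eq_zero_or _ w fun i => ?_
    by_cases hi : a i = 0
    · exact .inl hi
    · exact .inr (Set.indicator_of_notMem (by simp [S, hi]) _)
  · calc ∑ i, w i * ‖EuclideanSpace.indicator (↑S) z i‖ ≤ √(∑ i ∈ S, w i ^ 2) * ‖z‖ :=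
          EuclideanSpace.sum_mul_norm_indicator_le S w z
      _ ≤ √K * ‖z‖ := by gcongr

/-- Weighted sparsity: `(𝔽^N, Σ_{W,K}, ‖W·‖₁)` is a CS space with
bound `√K`, via an orthogonal decomposition. -/
theorem stmt3 {𝕜 : Type*} [RCLike 𝕜] {N : ℕ}
    (w : Fin N → ℝ) (hw : ∀ i, 0 < w i) (K : ℝ) (hK : 0 < K) :
    ∀ a : EuclideanSpace 𝕜 (Fin N),
      (∑ i ∈ Finset.univ.filter fun i => a i ≠ 0, w i ^ 2) ≤ K →
      ∀ z : EuclideanSpace 𝕜 (Fin N),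
        ∃ z₁ z₂ : EuclideanSpace 𝕜 (Fin N), z = z₁ + z₂ ∧
          inner 𝕜 z₁ z₂ = (0 : 𝕜) ∧
          (∑ i, w i * ‖a i + z₁ i‖) = (∑ i, w i * ‖a i‖) + (∑ i, w i * ‖z₁ i‖) ∧
          (∑ i, w i * ‖z₂ i‖) ≤ Real.sqrt K * ‖z‖ :=
  stmt3_general w K
end

section
/- Let {H_j}_{j∈J} be a finite family of finite-dimensional real or complex Hilbert spaces and let H = ⊕_{j∈J} H_j be their Hilbert-space direct sum, with x_j denoting the component of x in H_j. Set ‖x‖♯ := Σ_{j∈J} ‖x_j‖₂ and call x K-block sparse if at most K of the components x_j are nonzero. Then for every K-block sparse a ∈ H and every z ∈ H there exist z₁, z₂ ∈ H with z = z₁ + z₂, ⟨z₁, z₂⟩ = 0, ‖a + z₁‖♯ = ‖a‖♯ + ‖z₁‖♯, and ‖z₂‖♯ ≤ √K‖z‖₂; that is, (H, {K-block sparse vectors}, ‖·‖♯) is a CS space with bound √K. -/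
/-!
Split `z` along the blocks: `z₂` keeps the blocks where `a` is nonzero and `z₁` the others.
The two pieces have disjoint block supports, hence are orthogonal, and `z₁` lives where `a`
vanishes, so `‖a + z₁‖♯ = ‖a‖♯ + ‖z₁‖♯`. Since `z₂` has at most `K` nonzero blocks,
Cauchy–Schwarz gives `‖z₂‖♯ ≤ √K ‖z₂‖₂ ≤ √K ‖z‖₂`.
-/

open Finset

namespace PiLp

variable {J : Type*} {Hs : J → Type*}

section Seminormed

variable [∀ j, SeminormedAddCommGroup (Hs j)]

def restrictBlocks (s : Finset J) [DecidablePred (· ∈ s)] (z : PiLp 2 Hs) : PiLp 2 Hs :=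
  WithLp.toLp 2 (s.piecewise z 0)

@[simp]
theorem restrictBlocks_apply (s : Finset J) [DecidablePred (· ∈ s)] (z : PiLp 2 Hs) (j : J) :
    restrictBlocks s z j = if j ∈ s then z j else 0 :=
  rfl

variable [Fintype J]

theorem restrictBlocks_compl_add_restrictBlocks [DecidableEq J] (s : Finset J) (z : PiLp 2 Hs) :
    restrictBlocks sᶜ z + restrictBlocks s z = z := by
  ext j
  by_cases hj : j ∈ s <;> simp [hj]

theorem sum_norm_restrictBlocks (s : Finset J) [DecidablePred (· ∈ s)] (z : PiLp 2 Hs) :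
    ∑ j, ‖restrictBlocks s z j‖ = ∑ j ∈ s, ‖z j‖ := by
  simp [apply_ite norm, ← sum_filter]

theorem sum_norm_le_sqrt_card_mul_norm (s : Finset J) (z : PiLp 2 Hs) :
    ∑ j ∈ s, ‖z j‖ ≤ √(#s : ℝ) * ‖z‖ := by
  have h_cs : (∑ j ∈ s, ‖z j‖) ^ 2 ≤ #s * ∑ j ∈ s, ‖z j‖ ^ 2 := sq_sum_le_card_mul_sum_sq
  have h_sub : ∑ j ∈ s, ‖z j‖ ^ 2 ≤ ∑ j, ‖z j‖ ^ 2 :=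
    sum_le_sum_of_subset_of_nonneg (subset_univ s) fun j _ _ => sq_nonneg _
  rw [norm_eq_of_L2, ← Real.sqrt_mul (Nat.cast_nonneg _)]
  exact Real.le_sqrt_of_sq_le (h_cs.trans (by gcongr))

end Seminormed

theorem inner_restrictBlocks_of_disjoint [Fintype J] {𝕜 : Type*} [RCLike 𝕜]
    [∀ j, NormedAddCommGroup (Hs j)] [∀ j, InnerProductSpace 𝕜 (Hs j)]
    {s t : Finset J} [DecidablePred (· ∈ s)] [DecidablePred (· ∈ t)] (hst : Disjoint s t)
    (x y : PiLp 2 Hs) : inner 𝕜 (restrictBlocks s x) (restrictBlocks t y) = (0 : 𝕜) := by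
  rw [inner_apply]
  refine sum_eq_zero fun j _ => ?_
  by_cases hj : j ∈ s
  · simp [hj, disjoint_left.mp hst hj]
  · simp [hj]

end PiLp

theorem sum_norm_add_eq_of_forall_eq_zero_or_eq_zero {J : Type*} {Hs : J → Type*}
    [∀ j, SeminormedAddCommGroup (Hs j)] (s : Finset J) {x y : ∀ j, Hs j}
    (h : ∀ j, x j = 0 ∨ y j = 0) :
    ∑ j ∈ s, ‖x j + y j‖ = ∑ j ∈ s, ‖x j‖ + ∑ j ∈ s, ‖y j‖ := by
  rw [← sum_add_distrib]
  refine sum_congr rfl fun j _ => ?_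
  rcases h j with hx | hy
  · simp [hx]
  · simp [hy]

theorem stmt4_general {𝕜 : Type*} [RCLike 𝕜] {J : Type*} [Fintype J]
    (Hs : J → Type*) [∀ j, NormedAddCommGroup (Hs j)] [∀ j, InnerProductSpace 𝕜 (Hs j)]
    (K : ℕ) :
    ∀ a : PiLp 2 Hs, {j | a j ≠ 0}.ncard ≤ K →
      ∀ z : PiLp 2 Hs,
        ∃ z₁ z₂ : PiLp 2 Hs, z = z₁ + z₂ ∧
          inner 𝕜 z₁ z₂ = (0 : 𝕜) ∧
          (∑ j, ‖a j + z₁ j‖) = (∑ j, ‖a j‖) + (∑ j, ‖z₁ j‖) ∧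
          (∑ j, ‖z₂ j‖) ≤ Real.sqrt K * ‖z‖ := by
  intro a ha z
  classical
  set s := {j | a j ≠ 0}.toFinset
  have hs : #s ≤ K := by rwa [← Set.ncard_eq_toFinset_card']
  have ha_vanishes : ∀ j, a j = 0 ∨ PiLp.restrictBlocks sᶜ z j = 0 := fun j => by
    by_cases hj : a j = 0 <;> simp [s, hj]
  refine ⟨PiLp.restrictBlocks sᶜ z, PiLp.restrictBlocks s z,
    (PiLp.restrictBlocks_compl_add_restrictBlocks s z).symm,
    PiLp.inner_restrictBlocks_of_disjoint disjoint_compl_left z z,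
    sum_norm_add_eq_of_forall_eq_zero_or_eq_zero _ ha_vanishes, ?_⟩
  calc ∑ j, ‖PiLp.restrictBlocks s z j‖ = ∑ j ∈ s, ‖z j‖ := PiLp.sum_norm_restrictBlocks s z
    _ ≤ √(#s : ℝ) * ‖z‖ := PiLp.sum_norm_le_sqrt_card_mul_norm s z
    _ ≤ √K * ‖z‖ := by gcongr

/-- Block sparsity: with `H = ⊕_{j∈J} H_j` (Hilbert direct sum),
`‖x‖♯ = Σ_j ‖x_j‖₂`, and `A` the `K`-block sparse vectors, `(H, A, ‖·‖♯)` is a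
CS space with bound `√K`, via an orthogonal decomposition. -/
theorem stmt4 {𝕜 : Type*} [RCLike 𝕜] {J : Type*} [Fintype J]
    (Hs : J → Type*) [∀ j, NormedAddCommGroup (Hs j)] [∀ j, InnerProductSpace 𝕜 (Hs j)]
    [∀ j, FiniteDimensional 𝕜 (Hs j)] (K : ℕ) :
    ∀ a : PiLp 2 Hs, {j | a j ≠ 0}.ncard ≤ K →
      ∀ z : PiLp 2 Hs,
        ∃ z₁ z₂ : PiLp 2 Hs, z = z₁ + z₂ ∧
          inner 𝕜 z₁ z₂ = (0 : 𝕜) ∧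
          (∑ j, ‖a j + z₁ j‖) = (∑ j, ‖a j‖) + (∑ j, ‖z₁ j‖) ∧
          (∑ j, ‖z₂ j‖) ≤ Real.sqrt K * ‖z‖ :=
  stmt4_general Hs K
end

section
/- Let 𝔽 ∈ {ℝ, ℂ}, let K ≥ 0, and let A be an m×n matrix over 𝔽 with rank(A) ≤ K. Then for every m×n matrix Z over 𝔽 there exist m×n matrices Z₁, Z₂ such that Z = Z₁ + Z₂, Tr(Z₁Z₂*) = 0 (i.e., Z₁ and Z₂ are orthogonal in the Frobenius inner product), AZ₁* = 0, A*Z₁ = 0, and rank(Z₂) ≤ 2K. -/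
open Matrix

/-!
Let `P` and `Q` be the orthogonal projections onto the column spaces of `A` and `Aᴴ`. The
compression `Z₁ = (1 - P) Z (1 - Q)` is annihilated by `A` from both sides, the remainder
`Z₂ = P Z + (1 - P) Z Q` has rank at most `rank P + rank Q = 2 rank A`, and `Z₁ ⟂ Z₂` in the
Frobenius inner product because `P (1 - P) = 0` and `(1 - Q) Q = 0`.
-/

theorem Matrix.rank_add_le {K m n : Type*} [Field K] [Fintype n] (A B : Matrix m n K) :
    (A + B).rank ≤ A.rank + B.rank := by
  rw [rank, rank, rank, mulVecLin_add]
  exact (Submodule.finrank_mono (LinearMap.range_add_le _ _)).trans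
    (Submodule.finrank_add_le_finrank_add_finrank _ _)

theorem Matrix.rank_mul_add_mul_le {K m n : Type*} [Field K] [Fintype m] [Fintype n]
    (P : Matrix m m K) (Q : Matrix n n K) (X Y : Matrix m n K) :
    (P * X + Y * Q).rank ≤ P.rank + Q.rank :=
  (rank_add_le _ _).trans (add_le_add (rank_mul_le_left _ _) (rank_mul_le_right _ _))

section StarRing

variable {R m n : Type*} [CommRing R] [StarRing R] [Fintype m] [DecidableEq m]
  {P : Matrix m m R}

theorem Matrix.conjTranspose_mul_one_sub_eq_zero {A : Matrix m n R} (hP : IsSelfAdjoint P)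
    (hPA : P * A = A) : Aᴴ * (1 - P) = 0 := by
  rw [Matrix.mul_sub, Matrix.mul_one, ← hP.isHermitian.eq, ← conjTranspose_mul, hPA, sub_self]

variable [Fintype n] [DecidableEq n] {Q : Matrix n n R}

theorem Matrix.trace_mul_conjTranspose_eq_zero_of_isStarProjection
    (hP : IsStarProjection P) (hQ : IsStarProjection Q) (Z : Matrix m n R) :
    ((1 - P) * Z * (1 - Q) * (P * Z + (1 - P) * Z * Q)ᴴ).trace = 0 := by
  have hprod : (1 - P) * Z * (1 - Q) * (P * Z + (1 - P) * Z * Q)ᴴ =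
      (1 - P) * (Z * (1 - Q) * Zᴴ) * P := by
    simp only [conjTranspose_add, conjTranspose_mul, conjTranspose_sub, conjTranspose_one,
      hP.isSelfAdjoint.isHermitian.eq, hQ.isSelfAdjoint.isHermitian.eq, Matrix.mul_add,
      Matrix.mul_assoc]
    rw [← Matrix.mul_assoc (1 - Q) Q, hQ.one_sub_mul_self]
    simp only [Matrix.zero_mul, Matrix.mul_zero, add_zero]
  rw [hprod, trace_mul_comm, ← Matrix.mul_assoc, hP.mul_one_sub_self, Matrix.zero_mul, trace_zero]

end StarRing

section RCLike

variable {𝕜 m n : Type*} [RCLike 𝕜] [Fintype m] [Fintype n] [DecidableEq n]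

theorem Matrix.rank_eq_finrank_range_toEuclideanLin (A : Matrix m n 𝕜) :
    A.rank = Module.finrank 𝕜 (LinearMap.range (toEuclideanLin A)) :=
  rank_eq_finrank_range_toLin A (PiLp.basisFun 2 𝕜 m) (PiLp.basisFun 2 𝕜 n)

variable [DecidableEq m]

theorem Matrix.exists_isStarProjection_mul_left_eq_self (B : Matrix m n 𝕜) :
    ∃ P : Matrix m m 𝕜, IsStarProjection P ∧ P * B = B ∧ P.rank = B.rank := by
  set U := LinearMap.range (toEuclideanLin B)
  set P := (toEuclideanCLM (n := m) (𝕜 := 𝕜)).symm U.starProjection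
  have hP : toEuclideanLin P = U.starProjection.toLinearMap := by
    rw [← coe_toEuclideanCLM_eq_toEuclideanLin, StarAlgEquiv.apply_symm_apply]
  refine ⟨P, (isStarProjection_starProjection (U := U)).map
    (toEuclideanCLM (n := m) (𝕜 := 𝕜)).symm, ?_, ?_⟩
  · refine toEuclideanLin.injective (LinearMap.ext fun v => ?_)
    rw [toLpLin_mul_same, hP]
    exact U.starProjection_eq_self_iff.mpr ⟨v, rfl⟩
  · rw [rank_eq_finrank_range_toEuclideanLin, rank_eq_finrank_range_toEuclideanLin, hP,
      Submodule.range_starProjection]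

theorem Matrix.exists_isStarProjection_mul_right_eq_self (B : Matrix n m 𝕜) :
    ∃ Q : Matrix m m 𝕜, IsStarProjection Q ∧ B * Q = B ∧ Q.rank = B.rank := by
  obtain ⟨Q, hQ, hQB, hrank⟩ := exists_isStarProjection_mul_left_eq_self Bᴴ
  refine ⟨Q, hQ, ?_, ?_⟩
  · simpa [hQ.isSelfAdjoint.isHermitian.eq] using congrArg conjTranspose hQB
  · open scoped ComplexOrder in rw [hrank, rank_conjTranspose]

end RCLike

/-- The Recht–Fazel–Parrilo decomposition: if `rank A ≤ K`, then every
matrix `Z` decomposes as `Z = Z₁ + Z₂` with `Tr(Z₁ Z₂*) = 0`, `A Z₁* = 0`, `A* Z₁ = 0`,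
and `rank Z₂ ≤ 2K`. -/
theorem stmt7 {𝕜 : Type*} [RCLike 𝕜] {m n : ℕ} (K : ℕ)
    (A : Matrix (Fin m) (Fin n) 𝕜) (hA : A.rank ≤ K) :
    ∀ Z : Matrix (Fin m) (Fin n) 𝕜, ∃ Z₁ Z₂ : Matrix (Fin m) (Fin n) 𝕜,
      Z = Z₁ + Z₂ ∧ (Z₁ * Z₂ᴴ).trace = 0 ∧
      A * Z₁ᴴ = 0 ∧ Aᴴ * Z₁ = 0 ∧ Z₂.rank ≤ 2 * K := by
  intro Z
  obtain ⟨P, hP, hPA, hPrank⟩ := exists_isStarProjection_mul_left_eq_self A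
  obtain ⟨Q, hQ, hAQ, hQrank⟩ := exists_isStarProjection_mul_right_eq_self A
  have hAP_compl : Aᴴ * (1 - P) = 0 := conjTranspose_mul_one_sub_eq_zero hP.isSelfAdjoint hPA
  have hAQ_compl : A * (1 - Q) = 0 := by rw [Matrix.mul_sub, Matrix.mul_one, hAQ, sub_self]
  refine ⟨(1 - P) * Z * (1 - Q), P * Z + (1 - P) * Z * Q, ?_,
    trace_mul_conjTranspose_eq_zero_of_isStarProjection hP hQ Z, ?_, ?_, ?_⟩
  · simp only [Matrix.sub_mul, Matrix.mul_sub, Matrix.one_mul, Matrix.mul_one]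
    abel
  · rw [conjTranspose_mul, hQ.one_sub.isSelfAdjoint.isHermitian.eq, ← Matrix.mul_assoc,
      hAQ_compl, Matrix.zero_mul]
  · rw [← Matrix.mul_assoc, ← Matrix.mul_assoc, hAP_compl, Matrix.zero_mul, Matrix.zero_mul]
  · calc (P * Z + (1 - P) * Z * Q).rank ≤ P.rank + Q.rank := rank_mul_add_mul_le P Q _ _
      _ ≤ 2 * K := by rw [hPrank, hQrank]; omega
end

section
/- Let X, Y be subspaces of ℝ^N with dim X = dim Y ≥ 1. Then min over x ∈ X with ‖x‖₂ = 1 of (max over y ∈ Y with ‖y‖₂ = 1 of ⟨x, y⟩) equals √(1 − d(X, Y)²). -/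
/-!
The inner maximum is `‖P_Y x‖`, so the left-hand side is `m = min ‖P_Y x‖` over unit `x ∈ X`,
attained at some `x₀`. By Pythagoras `‖x - P_Y x‖ ≤ √(1 - m²) ‖x‖` on `X`, with equality at `x₀`.
Since `dim X = dim Y`, the bound `‖P_Y x‖ ≥ m ‖x‖` makes `P_Y : X → Y` onto, and self-adjointness
transfers it to `‖P_X y‖ ≥ m ‖y‖` on `Y`. The two one-sided bounds give `‖P_X - P_Y‖ ≤ √(1 - m²)`,
and `x₀` shows equality.
-/

/-- The gap metric between two subspaces: the operator norm of the difference of the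
orthogonal projections onto them. -/
noncomputable def gapMetric {N : ℕ} (X Y : Submodule ℝ (EuclideanSpace ℝ (Fin N))) : ℝ :=
  ‖X.subtypeL.comp X.orthogonalProjectionOnto - Y.subtypeL.comp Y.orthogonalProjectionOnto‖

namespace Submodule

variable {E : Type*} [NormedAddCommGroup E] [InnerProductSpace ℝ E]

lemma norm_sub_starProjection_sq (K : Submodule ℝ E) [K.HasOrthogonalProjection] (x : E) :
    ‖x - K.starProjection x‖ ^ 2 = ‖x‖ ^ 2 - ‖K.starProjection x‖ ^ 2 := by
  rw [K.norm_sq_eq_add_norm_sq_starProjection x, starProjection_orthogonal_val]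
  ring

lemma inner_starProjection_left_of_mem_right (K : Submodule ℝ E) [K.HasOrthogonalProjection]
    (x : E) {y : E} (hy : y ∈ K) : inner ℝ (K.starProjection x) y = inner ℝ x y := by
  rw [inner_starProjection_left_eq_right, starProjection_eq_self_iff.mpr hy]

lemma isGreatest_inner_unit_mem (K : Submodule ℝ E) [K.HasOrthogonalProjection] [Nontrivial K]
    (x : E) :
    IsGreatest ((fun y => inner ℝ x y) '' {y | y ∈ K ∧ ‖y‖ = 1}) ‖K.starProjection x‖ := by
  refine ⟨?_, ?_⟩
  · by_cases hx : K.starProjection x = 0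
    · obtain ⟨u, hu⟩ := exists_norm_eq K zero_le_one
      refine ⟨u, ⟨u.2, hu⟩, ?_⟩
      dsimp only
      rw [← K.inner_starProjection_left_of_mem_right x u.2, hx, inner_zero_left, norm_zero]
    · have hmem : ‖K.starProjection x‖⁻¹ • K.starProjection x ∈ K :=
        K.smul_mem _ (K.starProjection_apply_mem x)
      refine ⟨_, ⟨hmem, norm_smul_inv_norm hx⟩, ?_⟩
      dsimp only
      rw [← K.inner_starProjection_left_of_mem_right x hmem, real_inner_smul_right,
        real_inner_self_eq_norm_sq]
      field_simp
  · rintro _ ⟨y, ⟨hy, hy1⟩, rfl⟩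
    calc inner ℝ x y = inner ℝ (K.starProjection x) y :=
          (K.inner_starProjection_left_of_mem_right x hy).symm
      _ ≤ ‖K.starProjection x‖ * ‖y‖ := real_inner_le_norm _ _
      _ = ‖K.starProjection x‖ := by rw [hy1, mul_one]

lemma isCompact_unit_mem (K : Submodule ℝ E) [FiniteDimensional ℝ K] :
    IsCompact {x | x ∈ K ∧ ‖x‖ = 1} := by
  convert (isCompact_sphere (0 : K) 1).image continuous_subtype_val using 1
  ext x
  simp [and_comm]

lemma exists_isMinOn_unit_mem (K : Submodule ℝ E) [FiniteDimensional ℝ K] [Nontrivial K]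
    {f : E → ℝ} (hf : Continuous f) :
    ∃ x₀ ∈ {x | x ∈ K ∧ ‖x‖ = 1}, IsMinOn f {x | x ∈ K ∧ ‖x‖ = 1} x₀ := by
  obtain ⟨u, hu⟩ := exists_norm_eq K zero_le_one
  exact K.isCompact_unit_mem.exists_isMinOn ⟨u, u.2, hu⟩ hf.continuousOn

lemma mul_norm_le_norm_apply_of_unit_mem {F : Type*} [NormedAddCommGroup F] [NormedSpace ℝ F]
    (K : Submodule ℝ E) (T : E →L[ℝ] F) {c : ℝ} (h : ∀ x ∈ K, ‖x‖ = 1 → c ≤ ‖T x‖) :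
    ∀ x ∈ K, c * ‖x‖ ≤ ‖T x‖ := by
  intro x hx
  rcases eq_or_ne x 0 with rfl | hx0
  · simp
  have hunit := h (‖x‖⁻¹ • x) (K.smul_mem _ hx) (norm_smul_inv_norm hx0)
  rw [map_smul, norm_smul, norm_inv, norm_norm, inv_mul_eq_div, le_div_iff₀ (norm_pos_iff.mpr hx0)]
    at hunit
  exact hunit

lemma norm_sub_starProjection_le_of_mul_norm_le (K : Submodule ℝ E) [K.HasOrthogonalProjection]
    {m : ℝ} (hm : 0 ≤ m) {x : E} (h : m * ‖x‖ ≤ ‖K.starProjection x‖) :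
    ‖x - K.starProjection x‖ ≤ √(1 - m ^ 2) * ‖x‖ := by
  have hsq : ‖x - K.starProjection x‖ ^ 2 ≤ (1 - m ^ 2) * ‖x‖ ^ 2 := by
    rw [norm_sub_starProjection_sq]
    nlinarith [pow_le_pow_left₀ (by positivity) h 2]
  calc ‖x - K.starProjection x‖ = √(‖x - K.starProjection x‖ ^ 2) :=
        (Real.sqrt_sq (norm_nonneg _)).symm
    _ ≤ √((1 - m ^ 2) * ‖x‖ ^ 2) := Real.sqrt_le_sqrt hsq
    _ = √(1 - m ^ 2) * ‖x‖ := by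
        rw [Real.sqrt_mul' _ (by positivity), Real.sqrt_sq (norm_nonneg _)]

lemma mul_norm_le_norm_starProjection_of_finrank_eq {X Y : Submodule ℝ E} [FiniteDimensional ℝ X]
    [FiniteDimensional ℝ Y] (hdim : Module.finrank ℝ X = Module.finrank ℝ Y) {m : ℝ} (hm : 0 ≤ m)
    (h : ∀ x ∈ X, m * ‖x‖ ≤ ‖Y.starProjection x‖) :
    ∀ y ∈ Y, m * ‖y‖ ≤ ‖X.starProjection y‖ := by
  intro y hy
  rcases hm.eq_or_lt with rfl | hm
  · simp
  rcases eq_or_ne y 0 with rfl | hy0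
  · simp
  let T : X →ₗ[ℝ] Y := Y.orthogonalProjectionOnto.toLinearMap ∘ₗ X.subtype
  have hT : Function.Injective T := by
    refine (injective_iff_map_eq_zero T).mpr fun x hx => ?_
    have hx' : Y.starProjection x = 0 := congrArg Subtype.val hx
    have := h x x.2
    rw [hx', norm_zero] at this
    exact Subtype.ext (norm_le_zero_iff.mp (nonpos_of_mul_nonpos_right this hm))
  obtain ⟨x, hx⟩ := (LinearMap.injective_iff_surjective_of_finrank_eq_finrank hdim).mp hT ⟨y, hy⟩
  have hxy : Y.starProjection x = y := congrArg Subtype.val hx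
  have key : ‖y‖ * (m * ‖y‖) ≤ ‖y‖ * ‖X.starProjection y‖ :=
    calc ‖y‖ * (m * ‖y‖) = m * inner ℝ (x : E) (X.starProjection y) := by
          rw [← X.inner_starProjection_left_eq_right, starProjection_eq_self_iff.mpr x.2,
            ← Y.inner_starProjection_left_of_mem_right _ hy, hxy, real_inner_self_eq_norm_sq]
          ring
      _ ≤ m * (‖(x : E)‖ * ‖X.starProjection y‖) := by gcongr; exact real_inner_le_norm _ _
      _ ≤ ‖y‖ * ‖X.starProjection y‖ := by
          rw [← mul_assoc, ← hxy]; gcongr; exact h x x.2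
  exact le_of_mul_le_mul_left key (norm_pos_iff.mpr hy0)

lemma norm_starProjection_le_of_mem_orthogonal {X Y : Submodule ℝ E} [X.HasOrthogonalProjection]
    [Y.HasOrthogonalProjection] {δ : ℝ} (hδ : 0 ≤ δ)
    (h : ∀ x ∈ X, ‖x - Y.starProjection x‖ ≤ δ * ‖x‖) {w : E} (hw : w ∈ Yᗮ) :
    ‖X.starProjection w‖ ≤ δ * ‖w‖ := by
  set p := X.starProjection w
  rcases eq_or_ne p 0 with hp | hp
  · rw [hp, norm_zero]; positivity
  have key : ‖p‖ * ‖p‖ ≤ ‖p‖ * (δ * ‖w‖) :=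
    calc ‖p‖ * ‖p‖ = inner ℝ (p - Y.starProjection p) w := by
          rw [inner_sub_left, hw _ (Y.starProjection_apply_mem p), sub_zero, real_inner_comm,
            ← X.inner_starProjection_left_of_mem_right w (X.starProjection_apply_mem w),
            real_inner_self_eq_norm_mul_norm]
      _ ≤ ‖p - Y.starProjection p‖ * ‖w‖ := real_inner_le_norm _ _
      _ ≤ δ * ‖p‖ * ‖w‖ := by gcongr; exact h p (X.starProjection_apply_mem w)
      _ = ‖p‖ * (δ * ‖w‖) := by ring
  exact le_of_mul_le_mul_left key (norm_pos_iff.mpr hp)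

/-- `(P_X - P_Y) z = P_X (z - P_Y z) - (P_Y z - P_X P_Y z)` splits into a vector of `X` and one of
`Xᗮ`, bounded by `δ ‖z - P_Y z‖` and `δ ‖P_Y z‖`; Pythagoras in `Y` then gives `δ ‖z‖`. -/
lemma norm_starProjection_sub_starProjection_le {X Y : Submodule ℝ E} [X.HasOrthogonalProjection]
    [Y.HasOrthogonalProjection] {δ : ℝ} (hδ : 0 ≤ δ)
    (hX : ∀ x ∈ X, ‖x - Y.starProjection x‖ ≤ δ * ‖x‖)
    (hY : ∀ y ∈ Y, ‖y - X.starProjection y‖ ≤ δ * ‖y‖) :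
    ‖X.starProjection - Y.starProjection‖ ≤ δ := by
  refine ContinuousLinearMap.opNorm_le_bound _ hδ fun z => ?_
  set a := X.starProjection (z - Y.starProjection z)
  set b := Y.starProjection z - X.starProjection (Y.starProjection z)
  have hab : (X.starProjection - Y.starProjection) z = a - b := by
    simp only [a, b, sub_apply, map_sub]
    abel
  have hperp : inner ℝ a b = 0 :=
    X.inner_right_of_mem_orthogonal (X.starProjection_apply_mem _)
      (X.sub_starProjection_mem_orthogonal _)
  have ha : ‖a‖ ≤ δ * ‖z - Y.starProjection z‖ :=
    norm_starProjection_le_of_mem_orthogonal hδ hX (Y.sub_starProjection_mem_orthogonal z)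
  have hb : ‖b‖ ≤ δ * ‖Y.starProjection z‖ := hY _ (Y.starProjection_apply_mem z)
  have hsq : ‖a - b‖ ^ 2 ≤ (δ * ‖z‖) ^ 2 :=
    calc ‖a - b‖ ^ 2 = ‖a‖ ^ 2 + ‖b‖ ^ 2 := by rw [norm_sub_sq_real, hperp]; ring
      _ ≤ (δ * ‖z - Y.starProjection z‖) ^ 2 + (δ * ‖Y.starProjection z‖) ^ 2 := by gcongr
      _ = (δ * ‖z‖) ^ 2 := by rw [mul_pow, mul_pow, norm_sub_starProjection_sq]; ring
  rw [hab]
  exact (pow_le_pow_iff_left₀ (norm_nonneg _) (by positivity) two_ne_zero).mp hsq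

end Submodule

lemma gapMetric_eq_norm_starProjection_sub {N : ℕ}
    (X Y : Submodule ℝ (EuclideanSpace ℝ (Fin N))) :
    gapMetric X Y = ‖X.starProjection - Y.starProjection‖ :=
  rfl

/-- For subspaces `X, Y ⊆ ℝ^N` of equal dimension `≥ 1`,
`min_{x ∈ X, ‖x‖=1} max_{y ∈ Y, ‖y‖=1} ⟨x,y⟩ = √(1 − d(X,Y)²)`. -/
theorem stmt9 {N : ℕ} (X Y : Submodule ℝ (EuclideanSpace ℝ (Fin N)))
    (hdim : Module.finrank ℝ X = Module.finrank ℝ Y) (hpos : 1 ≤ Module.finrank ℝ X) :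
    sInf ((fun x : EuclideanSpace ℝ (Fin N) =>
        sSup ((fun y : EuclideanSpace ℝ (Fin N) => (inner ℝ x y : ℝ)) ''
          {y | y ∈ Y ∧ ‖y‖ = 1})) '' {x | x ∈ X ∧ ‖x‖ = 1})
      = Real.sqrt (1 - gapMetric X Y ^ 2) := by
  have : Nontrivial X := Module.finrank_pos_iff.mp hpos
  have : Nontrivial Y := Module.finrank_pos_iff.mp (hdim ▸ hpos)
  obtain ⟨x₀, ⟨hx₀X, hx₀1⟩, hmin⟩ :=
    X.exists_isMinOn_unit_mem (f := fun x => ‖Y.starProjection x‖) (by fun_prop)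
  set m := ‖Y.starProjection x₀‖
  have hXm : ∀ x ∈ X, m * ‖x‖ ≤ ‖Y.starProjection x‖ :=
    X.mul_norm_le_norm_apply_of_unit_mem _ fun x hx hx1 => hmin ⟨hx, hx1⟩
  have hYm := Submodule.mul_norm_le_norm_starProjection_of_finrank_eq hdim (norm_nonneg _) hXm
  have hdist_sq : ‖x₀ - Y.starProjection x₀‖ ^ 2 = 1 - m ^ 2 := by
    rw [Y.norm_sub_starProjection_sq, hx₀1, one_pow]
  have hgap : gapMetric X Y = √(1 - m ^ 2) := by
    rw [gapMetric_eq_norm_starProjection_sub]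
    refine le_antisymm (Submodule.norm_starProjection_sub_starProjection_le (Real.sqrt_nonneg _)
      (fun x hx => Y.norm_sub_starProjection_le_of_mul_norm_le (norm_nonneg _) (hXm x hx))
      (fun y hy => X.norm_sub_starProjection_le_of_mul_norm_le (norm_nonneg _) (hYm y hy))) ?_
    rw [← hdist_sq, Real.sqrt_sq (norm_nonneg _)]
    simpa [hx₀1, Submodule.starProjection_eq_self_iff.mpr hx₀X] using
      (X.starProjection - Y.starProjection).le_opNorm x₀
  have hinf : IsLeast ((fun x => ‖Y.starProjection x‖) '' {x | x ∈ X ∧ ‖x‖ = 1}) m :=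
    ⟨⟨x₀, ⟨hx₀X, hx₀1⟩, rfl⟩, by rintro _ ⟨x, hx, rfl⟩; exact hmin hx⟩
  rw [Set.image_congr fun x _ => (Y.isGreatest_inner_unit_mem x).csSup_eq, hinf.csInf_eq, hgap,
    Real.sq_sqrt (hdist_sq ▸ sq_nonneg _), sub_sub_cancel, Real.sqrt_sq (norm_nonneg _)]
end

section
/- Let H be a finite-dimensional real normed space with norm ‖·‖♯, let a ∈ H be nonzero, and let D := {y ∈ H : ∃ t > 0 with ‖a + ty‖♯ ≤ ‖a‖♯} be the descent cone of ‖·‖♯ at a. Let v ∈ H satisfy ‖v‖♯ = ‖a‖♯ and v − a ∈ cl(H \ D), the topological closure of the complement of D. Then for every c ≥ 0, ‖a + c·v‖♯ = ‖a‖♯ + ‖c·v‖♯ = ‖a‖♯ + c‖v‖♯. -/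
/-!
Moving from `a` in a direction of `cl(H \ D)` never decreases the norm, while on the segment
`[a, v]` the norm is at most `‖a‖` by convexity since `‖v‖ = ‖a‖`. Hence the norm is
constantly `‖a‖` on that segment, and `a + c • v` is `1 + c` times a point of it.
-/

section DescentCone

variable {E : Type*} [NormedAddCommGroup E] [NormedSpace ℝ E]

def descentCone (a : E) : Set E := {y : E | ∃ t : ℝ, 0 < t ∧ ‖a + t • y‖ ≤ ‖a‖}

theorem norm_le_norm_add_smul_of_mem_closure_compl_descentCone {a y : E}
    (hy : y ∈ closure (descentCone a)ᶜ) {t : ℝ} (ht : 0 < t) : ‖a‖ ≤ ‖a + t • y‖ := by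
  have hclosed : IsClosed {y : E | ‖a‖ ≤ ‖a + t • y‖} :=
    isClosed_le continuous_const (by fun_prop)
  refine closure_minimal (fun z hz => ?_) hclosed hy
  simp only [descentCone, Set.mem_compl_iff, Set.mem_ofPred_eq, not_exists, not_and,
    not_le] at hz
  exact (hz t ht).le

theorem norm_add_smul_sub_le {a v : E} (hv : ‖v‖ ≤ ‖a‖) {t : ℝ} (ht : t ∈ Set.Icc (0 : ℝ) 1) :
    ‖a + t • (v - a)‖ ≤ ‖a‖ := by
  have hmem := (convex_closedBall (0 : E) ‖a‖).add_smul_sub_mem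
    (mem_closedBall_zero_iff.2 le_rfl) (mem_closedBall_zero_iff.2 hv) ht
  exact mem_closedBall_zero_iff.1 hmem

theorem add_smul_eq_smul_add_smul_sub (a v : E) {c : ℝ} (hc : 0 ≤ c) :
    a + c • v = (1 + c) • (a + (c / (1 + c)) • (v - a)) := by
  have h1c : (1 + c) ≠ 0 := by positivity
  rw [smul_add, smul_smul, mul_div_cancel₀ c h1c]
  module

theorem norm_add_smul_eq_of_mem_closure_compl_descentCone {a v : E} (hv : ‖v‖ = ‖a‖)
    (hva : v - a ∈ closure (descentCone a)ᶜ) {c : ℝ} (hc : 0 ≤ c) :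
    ‖a + c • v‖ = ‖a‖ + c * ‖v‖ := by
  rcases hc.eq_or_lt with rfl | hc0
  · simp
  have h1c : 0 < 1 + c := by linarith
  have ht : c / (1 + c) ∈ Set.Icc (0 : ℝ) 1 :=
    ⟨by positivity, (div_le_one h1c).2 (by linarith)⟩
  have hsegment : ‖a + (c / (1 + c)) • (v - a)‖ = ‖a‖ :=
    le_antisymm (norm_add_smul_sub_le hv.le ht)
      (norm_le_norm_add_smul_of_mem_closure_compl_descentCone hva (by positivity))
  rw [add_smul_eq_smul_add_smul_sub a v hc, norm_smul, hsegment, Real.norm_of_nonneg h1c.le, hv]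
  ring

end DescentCone

theorem stmt19_general {H : Type*} [NormedAddCommGroup H] [NormedSpace ℝ H]
    (a : H)
    (D : Set H) (hD : D = {y : H | ∃ t : ℝ, 0 < t ∧ ‖a + t • y‖ ≤ ‖a‖})
    (v : H) (hv : ‖v‖ = ‖a‖) (hva : v - a ∈ closure Dᶜ) :
    ∀ c : ℝ, 0 ≤ c →
      ‖a + c • v‖ = ‖a‖ + ‖c • v‖ ∧ ‖a + c • v‖ = ‖a‖ + c * ‖v‖ := by
  subst hD
  intro c hc
  have h := norm_add_smul_eq_of_mem_closure_compl_descentCone hv hva hc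
  exact ⟨by rw [h, norm_smul, Real.norm_of_nonneg hc], h⟩

/-- Let `D` be the descent cone of the norm at a nonzero point `a`.
If `‖v‖ = ‖a‖` and `v − a` lies in the closure of the complement of `D`, then
`‖a + c·v‖ = ‖a‖ + ‖c·v‖ = ‖a‖ + c‖v‖` for every `c ≥ 0`. -/
theorem stmt19 {H : Type*} [NormedAddCommGroup H] [NormedSpace ℝ H]
    [FiniteDimensional ℝ H]
    (a : H) (ha : a ≠ 0)
    (D : Set H) (hD : D = {y : H | ∃ t : ℝ, 0 < t ∧ ‖a + t • y‖ ≤ ‖a‖})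
    (v : H) (hv : ‖v‖ = ‖a‖) (hva : v - a ∈ closure Dᶜ) :
    ∀ c : ℝ, 0 ≤ c →
      ‖a + c • v‖ = ‖a‖ + ‖c • v‖ ∧ ‖a + c • v‖ = ‖a‖ + c * ‖v‖ :=
  stmt19_general a D hD v hv hva
end
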